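/- arXiv:2407.21025 — 5 statements merged into one kernel-verified Lean document; each statement's English description precedes it below -/
import Mathlib

section
/- Let S and A be finite nonempty sets, f : S × A → ℝ, and for each pair of distinct states s' ≠ s and each a ∈ A let λ(s'|s,a) ≥ 0 be a transition rate, with total rate Λ(s,a) := ∑_{s'≠s} λ(s'|s,a); let γ > 0. Then there exists exactly one function V : S → ℝ satisfying the continuous-time dynamic programming optimality equation γ·V(s) = max_{a∈A} ( f(s,a) + ∑_{s'≠s} λ(s'|s,a)·V(s') − Λ(s,a)·V(s) ) for all s ∈ S. -/
/-!
Uniformization: with a constant `C` bounding every total rate, adding `C • V` to both sides turns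
the optimality equation into the fixed-point equation of
`V ↦ (γ + C)⁻¹ • (max_a (f + ∑ λ V(s') + (C - Λ) V(s)))`, whose inner expressions have nonnegative
weights summing to `C`. This operator is monotone and shifts constants by the factor `C / (γ + C) < 1`,
so by Blackwell's sufficient conditions it is a contraction in the sup norm, and Banach's fixed-point
theorem gives exactly one solution.
-/

open Finset NNReal

section Blackwell

variable {ι : Type*} [Fintype ι]

lemma le_add_const_dist (V W : ι → ℝ) : V ≤ W + fun _ => dist V W := fun i => by
  have := (abs_sub_le_iff.mp (Real.dist_eq (V i) (W i) ▸ dist_le_pi_dist V W i)).1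
  simp only [Pi.add_apply]
  linarith

/-- Blackwell's sufficient conditions for a contraction. -/
theorem lipschitzWith_of_monotone_of_map_add_const_le {T : (ι → ℝ) → (ι → ℝ)} {K : ℝ≥0}
    (hmono : Monotone T) (hshift : ∀ V (c : ℝ), 0 ≤ c → T (V + fun _ => c) ≤ T V + fun _ => K * c) :
    LipschitzWith K T := by
  have hle : ∀ V W, T V ≤ T W + fun _ => K * dist V W := fun V W =>
    (hmono (le_add_const_dist V W)).trans (hshift W _ dist_nonneg)
  refine LipschitzWith.of_dist_le_mul fun V W => (dist_pi_le_iff (by positivity)).2 fun i => ?_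
  have hVW : T V i ≤ T W i + K * dist V W := hle V W i
  have hWV : T W i ≤ T V i + K * dist V W := dist_comm V W ▸ hle W V i
  rw [Real.dist_eq, abs_sub_le_iff]
  constructor <;> linarith

end Blackwell

section Uniformization

variable {S A : Type*} [Fintype S] [DecidableEq S]

def totalRate (lam : S → S → A → ℝ) (s : S) (a : A) : ℝ :=
  ∑ s' ∈ univ.erase s, lam s' s a

lemma totalRate_nonneg {lam : S → S → A → ℝ} (hlam : ∀ s' s a, s' ≠ s → 0 ≤ lam s' s a)
    (s : S) (a : A) : 0 ≤ totalRate lam s a :=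
  sum_nonneg fun s' hs' => hlam s' s a (ne_of_mem_erase hs')

variable [Fintype A]

lemma exists_nonneg_forall_totalRate_le {lam : S → S → A → ℝ}
    (hlam : ∀ s' s a, s' ≠ s → 0 ≤ lam s' s a) :
    ∃ C, 0 ≤ C ∧ ∀ s a, totalRate lam s a ≤ C := by
  have hnonneg : ∀ p : S × A, 0 ≤ totalRate lam p.1 p.2 := fun p => totalRate_nonneg hlam _ _
  exact ⟨∑ p : S × A, totalRate lam p.1 p.2, sum_nonneg fun p _ => hnonneg p,
    fun s a => single_le_sum (fun p _ => hnonneg p) (mem_univ (s, a))⟩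

variable [Nonempty A]

def bellmanRHS (f : S → A → ℝ) (lam : S → S → A → ℝ) (V : S → ℝ) (s : S) : ℝ :=
  univ.sup' univ_nonempty fun a =>
    f s a + (∑ s' ∈ univ.erase s, lam s' s a * V s') - totalRate lam s a * V s

variable (f : S → A → ℝ) (lam : S → S → A → ℝ)

lemma bellmanRHS_add_const (V : S → ℝ) (c : ℝ) :
    bellmanRHS f lam (V + fun _ => c) = bellmanRHS f lam V := by
  funext s
  refine sup'_congr _ rfl fun a _ => ?_
  simp only [Pi.add_apply, mul_add, sum_add_distrib, ← sum_mul, totalRate]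
  ring

lemma bellmanRHS_add_mul_eq_sup' (C : ℝ) (V : S → ℝ) (s : S) :
    bellmanRHS f lam V s + C * V s = univ.sup' univ_nonempty fun a =>
      f s a + (∑ s' ∈ univ.erase s, lam s' s a * V s') + (C - totalRate lam s a) * V s := by
  rw [bellmanRHS, sup'_add]
  exact sup'_congr _ rfl fun a _ => by ring

/-- Once `C` dominates the total rates, every coefficient of `V` is nonnegative. -/
lemma monotone_bellmanRHS_add_smul (hlam : ∀ s' s a, s' ≠ s → 0 ≤ lam s' s a) {C : ℝ} (hC : ∀ s a, totalRate lam s a ≤ C) :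
    Monotone fun V => bellmanRHS f lam V + C • V := by
  intro V W hVW s
  simp only [Pi.add_apply, Pi.smul_apply, smul_eq_mul, bellmanRHS_add_mul_eq_sup']
  refine sup'_mono_fun fun a _ => ?_
  gcongr with s' hs'
  · exact hlam s' s a (ne_of_mem_erase hs')
  · exact hVW s'
  · exact sub_nonneg.2 (hC s a)
  · exact hVW s

noncomputable def uniformizedBellman (γ C : ℝ) (V : S → ℝ) : S → ℝ :=
  (γ + C)⁻¹ • (bellmanRHS f lam V + C • V)

lemma isFixedPt_uniformizedBellman_iff {γ C : ℝ} (hγC : γ + C ≠ 0) (V : S → ℝ) :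
    Function.IsFixedPt (uniformizedBellman f lam γ C) V ↔ γ • V = bellmanRHS f lam V := by
  rw [Function.IsFixedPt, uniformizedBellman, inv_smul_eq_iff₀ hγC, add_smul]
  constructor <;> intro h
  · exact (add_right_cancel h).symm
  · rw [h]

lemma contractingWith_uniformizedBellman (hlam : ∀ s' s a, s' ≠ s → 0 ≤ lam s' s a)
    {γ C : ℝ} (hγ : 0 < γ) (hC0 : 0 ≤ C) (hC : ∀ s a, totalRate lam s a ≤ C) :
    ContractingWith (⟨C / (γ + C), by positivity⟩ : ℝ≥0) (uniformizedBellman f lam γ C) := by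
  have hγC : 0 < γ + C := by linarith
  refine ⟨NNReal.coe_lt_coe.1 ((div_lt_one hγC).2 (by linarith)), ?_⟩
  refine lipschitzWith_of_monotone_of_map_add_const_le
    (fun V W hVW => smul_le_smul_of_nonneg_left
      (monotone_bellmanRHS_add_smul f lam hlam hC hVW) (inv_nonneg.2 hγC.le)) fun V c _ => ?_
  refine le_of_eq (funext fun s => ?_)
  simp only [uniformizedBellman, bellmanRHS_add_const, Pi.add_apply, Pi.smul_apply,
    smul_eq_mul]
  change _ = _ + C / (γ + C) * c
  field_simp
  ring

end Uniformization

theorem continuous_time_optimality_equation_existsUnique_general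
    {S A : Type*} [Fintype S] [DecidableEq S]
    [Fintype A] [Nonempty A]
    (f : S → A → ℝ) (lam : S → S → A → ℝ)
    (hlam : ∀ s' s a, s' ≠ s → 0 ≤ lam s' s a)
    (γ : ℝ) (hγ : 0 < γ) :
    ∃! V : S → ℝ, ∀ s : S, γ * V s =
      Finset.univ.sup' Finset.univ_nonempty (fun a : A =>
        f s a + (∑ s' ∈ Finset.univ.erase s, lam s' s a * V s')
          - (∑ s' ∈ Finset.univ.erase s, lam s' s a) * V s) := by
  obtain ⟨C, hC0, hC⟩ := exists_nonneg_forall_totalRate_le hlam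
  have hT := contractingWith_uniformizedBellman f lam hlam hγ hC0 hC
  have hfix (V : S → ℝ) : Function.IsFixedPt (uniformizedBellman f lam γ C) V ↔
      ∀ s, γ * V s = bellmanRHS f lam V s := by
    rw [isFixedPt_uniformizedBellman_iff f lam (by linarith), funext_iff]
    rfl
  exact ⟨_, (hfix _).1 hT.fixedPoint_isFixedPt, fun V hV => hT.fixedPoint_unique ((hfix V).2 hV)⟩

/-- Existence and uniqueness of the solution of the continuous-time dynamic
programming optimality equation
`γ·V(s) = max_{a∈A} ( f(s,a) + ∑_{s'≠s} λ(s'|s,a)·V(s') − Λ(s,a)·V(s) )`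
on finite nonempty state and action spaces, with nonnegative transition rates
`λ(s'|s,a)` for `s' ≠ s`, total rate `Λ(s,a) = ∑_{s'≠s} λ(s'|s,a)`, and
discount rate `γ > 0`. -/
theorem continuous_time_optimality_equation_existsUnique
    {S A : Type*} [Fintype S] [Nonempty S] [DecidableEq S]
    [Fintype A] [Nonempty A]
    (f : S → A → ℝ) (lam : S → S → A → ℝ)
    (hlam : ∀ s' s a, s' ≠ s → 0 ≤ lam s' s a)
    (γ : ℝ) (hγ : 0 < γ) :
    ∃! V : S → ℝ, ∀ s : S, γ * V s =
      Finset.univ.sup' Finset.univ_nonempty (fun a : A =>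
        f s a + (∑ s' ∈ Finset.univ.erase s, lam s' s a * V s')
          - (∑ s' ∈ Finset.univ.erase s, lam s' s a) * V s) :=
  continuous_time_optimality_equation_existsUnique_general f lam hlam γ hγ
end

section
/- Let S and A be finite nonempty sets, g : S × A → ℝ, p(·|s,a) a probability vector on S for each (s,a) (i.e. p(s'|s,a) ≥ 0 and ∑_{s'∈S} p(s'|s,a) = 1), and β ∈ [0,1). Then there exists a unique function V : S → ℝ satisfying the Bellman equation V(s) = max_{a∈A} ( g(s,a) + β·∑_{s'∈S} p(s'|s,a)·V(s') ) for all s ∈ S; moreover there exists a deterministic stationary policy π : S → A such that V(s) = g(s,π(s)) + β·∑_{s'∈S} p(s'|s,π(s))·V(s') for all s ∈ S. -/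
/-- Existence and uniqueness of the solution of the discrete-time Bellman
optimality equation
`V(s) = max_{a∈A} ( g(s,a) + β·∑_{s'∈S} p(s'|s,a)·V(s') )`
on finite nonempty state and action spaces, with `p(·|s,a)` a probability
vector on `S` and discount factor `β ∈ [0,1)`; moreover any solution admits a
deterministic stationary policy `π : S → A` attaining the maximum at every
state. -/
theorem discrete_time_bellman_existsUnique_and_policy
    {S A : Type*} [Fintype S] [Nonempty S] [Fintype A] [Nonempty A]
    (g : S → A → ℝ) (p : S → A → S → ℝ)
    (hp0 : ∀ s a s', 0 ≤ p s a s') (hp1 : ∀ s a, ∑ s', p s a s' = 1)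
    (β : ℝ) (hβ0 : 0 ≤ β) (hβ1 : β < 1) :
    (∃! V : S → ℝ, ∀ s : S, V s =
        Finset.univ.sup' Finset.univ_nonempty (fun a : A =>
          g s a + β * ∑ s', p s a s' * V s')) ∧
    (∀ V : S → ℝ,
      (∀ s : S, V s =
        Finset.univ.sup' Finset.univ_nonempty (fun a : A =>
          g s a + β * ∑ s', p s a s' * V s')) →
      ∃ π : S → A, ∀ s : S,
        V s = g s (π s) + β * ∑ s', p s (π s) s' * V s') := by
  classical
  set T : (S → ℝ) → (S → ℝ) := fun V s =>
    Finset.univ.sup' Finset.univ_nonempty (fun a : A =>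
      g s a + β * ∑ s', p s a s' * V s') with hT
  -- one-sided contraction bound
  have key : ∀ V W : S → ℝ, ∀ s, T V s - T W s ≤ β * dist V W := by
    intro V W s
    obtain ⟨a, -, ha⟩ := Finset.exists_mem_eq_sup' Finset.univ_nonempty
      (fun a : A => g s a + β * ∑ s', p s a s' * V s')
    have h1 : T V s = g s a + β * ∑ s', p s a s' * V s' := ha
    have h2 : g s a + β * ∑ s', p s a s' * W s' ≤ T W s :=
      Finset.le_sup' (fun a : A => g s a + β * ∑ s', p s a s' * W s')
        (Finset.mem_univ a)
    have hsum : (∑ s', p s a s' * V s') - ∑ s', p s a s' * W s' ≤ dist V W := by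
      rw [← Finset.sum_sub_distrib]
      calc ∑ s', (p s a s' * V s' - p s a s' * W s')
          ≤ ∑ s' : S, p s a s' * dist V W := by
            apply Finset.sum_le_sum
            intro s' _
            rw [← mul_sub]
            refine mul_le_mul_of_nonneg_left ?_ (hp0 s a s')
            have h := dist_le_pi_dist V W s'
            rw [Real.dist_eq] at h
            exact le_trans (le_abs_self _) h
        _ = dist V W := by rw [← Finset.sum_mul, hp1, one_mul]
    nlinarith [h2, hsum, h1]
  have hlip : ∀ V W : S → ℝ, dist (T V) (T W) ≤ β * dist V W := by
    intro V W
    refine (dist_pi_le_iff (mul_nonneg hβ0 dist_nonneg)).2 fun s => ?_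
    rw [Real.dist_eq, abs_sub_le_iff]
    exact ⟨key V W s, by rw [dist_comm V W] at *; exact key W V s⟩
  have hc : ContractingWith ⟨β, hβ0⟩ T :=
    ⟨by exact_mod_cast hβ1, LipschitzWith.of_dist_le_mul hlip⟩
  constructor
  · refine ⟨hc.fixedPoint T, ?_, ?_⟩
    · intro s
      have := hc.fixedPoint_isFixedPt (f := T)
      conv_lhs => rw [← this]
    · intro W hW
      have hWfix : T W = W := by funext s; exact (hW s).symm
      have h1 : dist W (hc.fixedPoint T) ≤ β * dist W (hc.fixedPoint T) := by
        have := hlip W (hc.fixedPoint T)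
        rw [hWfix, hc.fixedPoint_isFixedPt (f := T)] at this
        exact this
      have h0 : dist W (hc.fixedPoint T) = 0 := by
        nlinarith [dist_nonneg (x := W) (y := hc.fixedPoint T)]
      exact dist_eq_zero.mp h0
  · intro V hV
    choose π hmem hπ using fun s => Finset.exists_mem_eq_sup' Finset.univ_nonempty
      (fun a : A => g s a + β * ∑ s', p s a s' * V s')
    exact ⟨π, fun s => by rw [hV s, hπ s]⟩
end

section
/- Let S and A be finite nonempty sets, f : S × A → ℝ, λ(s'|s,a) ≥ 0 for s' ≠ s with total rate Λ(s,a) := ∑_{s'≠s} λ(s'|s,a), and γ > 0. Let (Δ_n) be a sequence of positive reals with Δ_n → 0 and Δ_n·Λ(s,a) ≤ 1 for all (s,a) and n, and suppose V_n : S → ℝ satisfies the discrete-time Bellman equation with increment Δ_n, i.e. V_n(s) = max_{a∈A} ( Δ_n·f(s,a) + e^{−γΔ_n}·∑_{s'∈S} p_{Δ_n}(s'|s,a)·V_n(s') ) for all s, and that V_n(s) → V*(s) for every s ∈ S. Then V* satisfies the continuous-time optimality equation γ·V*(s) = max_{a∈A} ( f(s,a) + ∑_{s'≠s} λ(s'|s,a)·V*(s')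 − Λ(s,a)·V*(s) ) for all s ∈ S. -/
/-!
Subtracting `e^{-γΔ} V(s)` from the discrete Bellman equation and dividing by `Δ` turns it
into `((1 - e^{-γΔ}) / Δ) V(s) = max_a (f(s,a) + e^{-γΔ} (∑ λ V(s') - Λ V(s)))`, because
`Δ > 0` can be pulled out of the maximum. As `Δ → 0`, the factor `(1 - e^{-γΔ}) / Δ` tends to
the derivative `γ` of `x ↦ 1 - e^{-γx}` at `0`, and the maximum over the finite action set is
continuous in its arguments, so the limit of both sides is the continuous-time equation.
-/

open Filter Topology Finset

theorem tendsto_one_sub_exp_neg_mul_div_nhdsNE (γ : ℝ) :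
    Tendsto (fun x : ℝ => (1 - Real.exp (-(γ * x))) / x) (𝓝[≠] 0) (𝓝 γ) := by
  have hderiv : HasDerivAt (fun x : ℝ => 1 - Real.exp (-(γ * x))) γ 0 := by
    simpa using ((((hasDerivAt_id (0 : ℝ)).const_mul γ).neg).exp).const_sub 1
  refine (hasDerivAt_iff_tendsto_slope.mp hderiv).congr fun x => ?_
  simp [slope_def_field]

theorem mul_eq_sup'_of_eq_sup'_mul_add {ι : Type*} {s : Finset ι} (hs : s.Nonempty)
    {g : ι → ℝ} {v β Δ : ℝ} (hΔ : 0 < Δ) (h : v = s.sup' hs fun a => β * v + Δ * g a) :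
    (1 - β) / Δ * v = s.sup' hs g := by
  rw [← add_sup', ← mul₀_sup' hΔ.le] at h
  field_simp
  linear_combination h

section JumpGenerator

variable {S A : Type*} [Fintype S] [DecidableEq S] (lam : S → S → A → ℝ)

def jumpGenerator (W : S → ℝ) (s : S) (a : A) : ℝ :=
  ∑ s' ∈ univ.erase s, lam s' s a * W s' - (∑ s' ∈ univ.erase s, lam s' s a) * W s

theorem continuous_jumpGenerator (s : S) (a : A) :
    Continuous fun W : S → ℝ => jumpGenerator lam W s a := by
  unfold jumpGenerator
  fun_prop

theorem discrete_bellman_term_eq (f : ℝ) (W : S → ℝ) (s : S) (a : A) (Δ β : ℝ) :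
    Δ * f + β * ((1 - Δ * ∑ s' ∈ univ.erase s, lam s' s a) * W s +
        ∑ s' ∈ univ.erase s, Δ * lam s' s a * W s') =
      β * W s + Δ * (f + β * jumpGenerator lam W s a) := by
  simp only [jumpGenerator, mul_assoc, ← mul_sum]
  ring

end JumpGenerator

theorem discrete_bellman_limit_satisfies_continuous_equation_general
    {S A : Type*} [Fintype S] [DecidableEq S]
    [Fintype A] [Nonempty A]
    (f : S → A → ℝ) (lam : S → S → A → ℝ)
    (γ : ℝ)
    (Δ : ℕ → ℝ) (hΔpos : ∀ n, 0 < Δ n)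
    (hΔ0 : Filter.Tendsto Δ Filter.atTop (nhds 0))
    (V : ℕ → S → ℝ) (Vstar : S → ℝ)
    (hBellman : ∀ n, ∀ s : S, V n s =
      Finset.univ.sup' Finset.univ_nonempty (fun a : A =>
        Δ n * f s a + Real.exp (-(γ * Δ n)) *
          ((1 - Δ n * ∑ s' ∈ Finset.univ.erase s, lam s' s a) * V n s +
            ∑ s' ∈ Finset.univ.erase s, Δ n * lam s' s a * V n s')))
    (hconv : ∀ s : S,
      Filter.Tendsto (fun n => V n s) Filter.atTop (nhds (Vstar s))) :
    ∀ s : S, γ * Vstar s =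
      Finset.univ.sup' Finset.univ_nonempty (fun a : A =>
        f s a + (∑ s' ∈ Finset.univ.erase s, lam s' s a * Vstar s')
          - (∑ s' ∈ Finset.univ.erase s, lam s' s a) * Vstar s) := by
  intro s
  have hΔ : Tendsto Δ atTop (𝓝[≠] 0) :=
    tendsto_nhdsWithin_iff.2 ⟨hΔ0, .of_forall fun n => (hΔpos n).ne'⟩
  have hexp : Tendsto (fun n => Real.exp (-(γ * Δ n))) atTop (𝓝 1) := by
    simpa [Function.comp_def] using (Real.continuous_exp.tendsto _).comp (hΔ0.const_mul γ).neg
  have hgen : ∀ a, Tendsto (fun n => jumpGenerator lam (V n) s a) atTop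
      (𝓝 (jumpGenerator lam Vstar s a)) := fun a =>
    ((continuous_jumpGenerator lam s a).tendsto Vstar).comp (tendsto_pi_nhds.2 hconv)
  have hscaled : ∀ n, (1 - Real.exp (-(γ * Δ n))) / Δ n * V n s =
      univ.sup' univ_nonempty fun a =>
        f s a + Real.exp (-(γ * Δ n)) * jumpGenerator lam (V n) s a :=
    fun n => mul_eq_sup'_of_eq_sup'_mul_add _ (hΔpos n) <|
      (hBellman n s).trans <| sup'_congr _ rfl fun a _ => discrete_bellman_term_eq lam _ _ _ _ _ _
  have hlhs := ((tendsto_one_sub_exp_neg_mul_div_nhdsNE γ).comp hΔ).mul (hconv s)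
  have hrhs : Tendsto (fun n => (1 - Real.exp (-(γ * Δ n))) / Δ n * V n s) atTop
      (𝓝 (univ.sup' univ_nonempty fun a => f s a + jumpGenerator lam Vstar s a)) := by
    simp only [hscaled]
    refine Tendsto.finset_sup'_nhds_apply _ fun a _ => tendsto_const_nhds.add ?_
    simpa using hexp.mul (hgen a)
  rw [tendsto_nhds_unique hlhs hrhs]
  simp only [jumpGenerator, add_sub_assoc]

/-- If `V_n` solves the discrete-time Bellman equation with increment `Δ_n`
(with discretized transition probabilities `p_Δ(s'|s,a) = Δ·λ(s'|s,a)` for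
`s' ≠ s` and `p_Δ(s|s,a) = 1 − Δ·Λ(s,a)`), `Δ_n → 0`, and `V_n → V*`
pointwise, then `V*` satisfies the continuous-time dynamic programming
optimality equation
`γ·V*(s) = max_{a∈A} ( f(s,a) + ∑_{s'≠s} λ(s'|s,a)·V*(s') − Λ(s,a)·V*(s) )`. -/
theorem discrete_bellman_limit_satisfies_continuous_equation
    {S A : Type*} [Fintype S] [Nonempty S] [DecidableEq S]
    [Fintype A] [Nonempty A]
    (f : S → A → ℝ) (lam : S → S → A → ℝ)
    (hlam : ∀ s' s a, s' ≠ s → 0 ≤ lam s' s a)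
    (γ : ℝ) (hγ : 0 < γ)
    (Δ : ℕ → ℝ) (hΔpos : ∀ n, 0 < Δ n)
    (hΔ0 : Filter.Tendsto Δ Filter.atTop (nhds 0))
    (hΔlam : ∀ n s a,
      Δ n * (∑ s' ∈ Finset.univ.erase s, lam s' s a) ≤ 1)
    (V : ℕ → S → ℝ) (Vstar : S → ℝ)
    (hBellman : ∀ n, ∀ s : S, V n s =
      Finset.univ.sup' Finset.univ_nonempty (fun a : A =>
        Δ n * f s a + Real.exp (-(γ * Δ n)) *
          ((1 - Δ n * ∑ s' ∈ Finset.univ.erase s, lam s' s a) * V n s +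
            ∑ s' ∈ Finset.univ.erase s, Δ n * lam s' s a * V n s')))
    (hconv : ∀ s : S,
      Filter.Tendsto (fun n => V n s) Filter.atTop (nhds (Vstar s))) :
    ∀ s : S, γ * Vstar s =
      Finset.univ.sup' Finset.univ_nonempty (fun a : A =>
        f s a + (∑ s' ∈ Finset.univ.erase s, lam s' s a * Vstar s')
          - (∑ s' ∈ Finset.univ.erase s, lam s' s a) * Vstar s) :=
  discrete_bellman_limit_satisfies_continuous_equation_general f lam γ Δ hΔpos hΔ0 V Vstar hBellman
    hconv
end

section
/- Let S and A be finite nonempty sets, f : S × A → ℝ, λ(s'|s,a) ≥ 0 for s' ≠ s with total rate Λ(s,a) := ∑_{s'≠s} λ(s'|s,a), and γ > 0. Let V₀ be the unique solution of the continuous-time optimality equation and, for each Δ > 0 with Δ·Λ(s,a) ≤ 1 for all (s,a), let V_Δ be the unique solution of the discrete-time Bellman equation with increment Δ. Assume that for every s the maximizer over a ∈ A of f(s,a) + ∑_{s'≠s} λ(s'|s,a)·V₀(s') − Λ(s,a)·V₀(s) is unique, and that for every such Δ and every s the maximizer over a ∈ A of Δ·f(s,a) + e^{−γΔ}·∑_{s'}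 p_Δ(s'|s,a)·V_Δ(s') is unique. Then there exists Δ₀ > 0 such that for all Δ ∈ (0, Δ₀) and all s ∈ S, the unique maximizer of the discrete-time right-hand side at V_Δ equals the unique maximizer of the continuous-time right-hand side at V₀; that is, the discrete-time optimal policy is identical to the continuous-time optimal policy for all sufficiently small Δ. -/
/-- Right-hand side of the continuous-time dynamic programming optimality
equation at a value function `V`:
`f(s,a) + ∑_{s'≠s} λ(s'|s,a)·V(s') − Λ(s,a)·V(s)`. -/
noncomputable def contRHS {S A : Type*} [Fintype S] [DecidableEq S]
    (f : S → A → ℝ) (lam : S → S → A → ℝ) (V : S → ℝ) (s : S) (a : A) : ℝ :=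
  f s a + (∑ s' ∈ Finset.univ.erase s, lam s' s a * V s')
    - (∑ s' ∈ Finset.univ.erase s, lam s' s a) * V s

/-- Right-hand side of the discrete-time Bellman equation with increment `Δ`
at a value function `V`:
`Δ·f(s,a) + e^{−γΔ}·∑_{s'} p_Δ(s'|s,a)·V(s')` with
`p_Δ(s'|s,a) = Δ·λ(s'|s,a)` for `s' ≠ s` and `p_Δ(s|s,a) = 1 − Δ·Λ(s,a)`. -/
noncomputable def discRHS {S A : Type*} [Fintype S] [DecidableEq S]
    (f : S → A → ℝ) (lam : S → S → A → ℝ) (γ Δ : ℝ) (V : S → ℝ)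
    (s : S) (a : A) : ℝ :=
  Δ * f s a + Real.exp (-(γ * Δ)) *
    ((1 - Δ * ∑ s' ∈ Finset.univ.erase s, lam s' s a) * V s +
      ∑ s' ∈ Finset.univ.erase s, Δ * lam s' s a * V s')

/-- The drift part `∑_{s'≠s} λ(s'|s,a)·V(s') − Λ(s,a)·V(s)`. -/
noncomputable def Dop {S A : Type*} [Fintype S] [DecidableEq S]
    (lam : S → S → A → ℝ) (V : S → ℝ) (s : S) (a : A) : ℝ :=
  (∑ s' ∈ Finset.univ.erase s, lam s' s a * V s')
    - (∑ s' ∈ Finset.univ.erase s, lam s' s a) * V s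


lemma contRHS_eq {S A : Type*} [Fintype S] [DecidableEq S]
    (f : S → A → ℝ) (lam : S → S → A → ℝ) (V : S → ℝ) (s : S) (a : A) :
    contRHS f lam V s a = f s a + Dop lam V s a := by
  unfold contRHS Dop; ring

lemma discRHS_eq {S A : Type*} [Fintype S] [DecidableEq S]
    (f : S → A → ℝ) (lam : S → S → A → ℝ) (γ Δ : ℝ) (V : S → ℝ) (s : S) (a : A) :
    discRHS f lam γ Δ V s a
      = Δ * f s a + Real.exp (-(γ * Δ)) * (V s + Δ * Dop lam V s a) := by
  unfold discRHS Dop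
  rw [show (∑ s' ∈ Finset.univ.erase s, Δ * lam s' s a * V s')
      = Δ * ∑ s' ∈ Finset.univ.erase s, lam s' s a * V s' by
    rw [Finset.mul_sum]; exact Finset.sum_congr rfl (fun x _ => by ring)]
  ring

lemma Dop_sub {S A : Type*} [Fintype S] [DecidableEq S]
    (lam : S → S → A → ℝ) (V W : S → ℝ) (s : S) (a : A) :
    Dop lam V s a - Dop lam W s a = Dop lam (fun t => V t - W t) s a := by
  unfold Dop
  simp only [mul_sub, Finset.sum_sub_distrib]
  ring

lemma Dop_bound {S A : Type*} [Fintype S] [DecidableEq S]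
    (lam : S → S → A → ℝ) (V : S → ℝ) (s : S) (a : A)
    (hlam : ∀ s' , s' ≠ s → 0 ≤ lam s' s a)
    (B : ℝ) (hB : ∀ t, |V t| ≤ B) :
    |Dop lam V s a| ≤ 2 * (∑ s' ∈ Finset.univ.erase s, lam s' s a) * B := by
  have hB0 : 0 ≤ B := le_trans (abs_nonneg _) (hB s)
  have h1 : |∑ s' ∈ Finset.univ.erase s, lam s' s a * V s'|
      ≤ (∑ s' ∈ Finset.univ.erase s, lam s' s a) * B := by
    refine le_trans (Finset.abs_sum_le_sum_abs _ _) ?_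
    rw [Finset.sum_mul]
    refine Finset.sum_le_sum (fun s' hs' => ?_)
    have h0 := hlam s' (Finset.ne_of_mem_erase hs')
    rw [abs_mul, abs_of_nonneg h0]
    exact mul_le_mul_of_nonneg_left (hB s') h0
  have hΛ0 : 0 ≤ ∑ s' ∈ Finset.univ.erase s, lam s' s a :=
    Finset.sum_nonneg (fun s' hs' => hlam s' (Finset.ne_of_mem_erase hs'))
  have h2 : |(∑ s' ∈ Finset.univ.erase s, lam s' s a) * V s|
      ≤ (∑ s' ∈ Finset.univ.erase s, lam s' s a) * B := by
    rw [abs_mul, abs_of_nonneg hΛ0]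
    exact mul_le_mul_of_nonneg_left (hB s) hΛ0
  unfold Dop
  refine le_trans (abs_sub _ _) (by linarith)

lemma stoch_bound {S A : Type*} [Fintype S] [DecidableEq S]
    (lam : S → S → A → ℝ) (W : S → ℝ) (s : S) (a : A)
    (hlam : ∀ s' , s' ≠ s → 0 ≤ lam s' s a)
    (Δ : ℝ) (hΔ : 0 ≤ Δ)
    (h1 : Δ * (∑ s' ∈ Finset.univ.erase s, lam s' s a) ≤ 1)
    (N : ℝ) (hN : ∀ t, |W t| ≤ N) :
    |W s + Δ * Dop lam W s a| ≤ N := by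
  have hrw : W s + Δ * Dop lam W s a
      = (1 - Δ * ∑ s' ∈ Finset.univ.erase s, lam s' s a) * W s
        + ∑ s' ∈ Finset.univ.erase s, Δ * lam s' s a * W s' := by
    unfold Dop
    rw [show (∑ s' ∈ Finset.univ.erase s, Δ * lam s' s a * W s')
        = Δ * ∑ s' ∈ Finset.univ.erase s, lam s' s a * W s' by
      rw [Finset.mul_sum]; exact Finset.sum_congr rfl (fun x _ => by ring)]
    ring
  rw [hrw]
  have hc : |(1 - Δ * ∑ s' ∈ Finset.univ.erase s, lam s' s a) * W s|
      ≤ (1 - Δ * ∑ s' ∈ Finset.univ.erase s, lam s' s a) * N := by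
    rw [abs_mul, abs_of_nonneg (by linarith)]
    exact mul_le_mul_of_nonneg_left (hN s) (by linarith)
  have hs2 : |∑ s' ∈ Finset.univ.erase s, Δ * lam s' s a * W s'|
      ≤ (Δ * ∑ s' ∈ Finset.univ.erase s, lam s' s a) * N := by
    refine le_trans (Finset.abs_sum_le_sum_abs _ _) ?_
    rw [Finset.mul_sum, Finset.sum_mul]
    refine Finset.sum_le_sum (fun s' hs' => ?_)
    have h0 := hlam s' (Finset.ne_of_mem_erase hs')
    rw [abs_mul, abs_of_nonneg (mul_nonneg hΔ h0)]
    exact mul_le_mul_of_nonneg_left (hN s') (mul_nonneg hΔ h0)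
  refine le_trans (abs_add_le _ _) (le_trans (add_le_add hc hs2) (le_of_eq (by ring)))

lemma sup'_abs_diff {α : Type*} (s : Finset α) (h : s.Nonempty)
    (f g : α → ℝ) (M : ℝ) (hM : ∀ a ∈ s, |f a - g a| ≤ M) :
    |s.sup' h f - s.sup' h g| ≤ M := by
  rw [abs_sub_le_iff]
  constructor
  · rw [sub_le_iff_le_add]
    refine Finset.sup'_le _ _ (fun a ha => ?_)
    have h1 := (abs_le.mp (hM a ha)).2
    have h2 := Finset.le_sup' g ha
    linarith
  · rw [sub_le_iff_le_add]
    refine Finset.sup'_le _ _ (fun a ha => ?_)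
    have h1 := (abs_le.mp (hM a ha)).1
    have h2 := Finset.le_sup' f ha
    linarith

set_option maxHeartbeats 2000000 in
/-- Identity of the discrete-time and continuous-time optimal policies for all
sufficiently small `Δ`: if `V₀` solves the continuous-time optimality equation
with unique maximizer `a₀(s)` in every state, and for each admissible `Δ` the
solution `V_Δ` of the discrete-time Bellman equation has unique maximizer
`a_Δ(s)` in every state, then there is `Δ₀ > 0` such that `a_Δ(s) = a₀(s)`
for all `Δ ∈ (0, Δ₀)` and all states `s`. -/
theorem discretized_optimal_policy_eventually_identical
    {S A : Type*} [Fintype S] [Nonempty S] [DecidableEq S]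
    [Fintype A] [Nonempty A]
    (f : S → A → ℝ) (lam : S → S → A → ℝ)
    (hlam : ∀ s' s a, s' ≠ s → 0 ≤ lam s' s a)
    (γ : ℝ) (hγ : 0 < γ)
    (V₀ : S → ℝ)
    (hV₀ : ∀ s : S, γ * V₀ s =
      Finset.univ.sup' Finset.univ_nonempty (contRHS f lam V₀ s))
    (a₀ : S → A)
    (ha₀ : ∀ s : S, ∀ a : A, a ≠ a₀ s →
      contRHS f lam V₀ s a < contRHS f lam V₀ s (a₀ s))
    (VΔ : ℝ → S → ℝ) (aΔ : ℝ → S → A)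
    (hVΔ : ∀ Δ : ℝ, 0 < Δ →
      (∀ s a, Δ * (∑ s' ∈ Finset.univ.erase s, lam s' s a) ≤ 1) →
      ∀ s : S, VΔ Δ s =
        Finset.univ.sup' Finset.univ_nonempty (discRHS f lam γ Δ (VΔ Δ) s))
    (haΔ : ∀ Δ : ℝ, 0 < Δ →
      (∀ s a, Δ * (∑ s' ∈ Finset.univ.erase s, lam s' s a) ≤ 1) →
      ∀ s : S, ∀ a : A, a ≠ aΔ Δ s →
        discRHS f lam γ Δ (VΔ Δ) s a <
          discRHS f lam γ Δ (VΔ Δ) s (aΔ Δ s)) :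
    ∃ Δ₀ > (0 : ℝ), ∀ Δ : ℝ, 0 < Δ → Δ < Δ₀ →
      (∀ s a, Δ * (∑ s' ∈ Finset.univ.erase s, lam s' s a) ≤ 1) →
      ∀ s : S, aΔ Δ s = a₀ s := by
  classical
  by_cases hA : ∀ s : S, ∀ a : A, a = a₀ s
  · exact ⟨1, one_pos, fun Δ _ _ _ s => hA s (aΔ Δ s)⟩
  push_neg at hA
  obtain ⟨s₁, a₁, ha₁⟩ := hA
  have hΛ0 : ∀ (s : S) (a : A), 0 ≤ ∑ s' ∈ Finset.univ.erase s, lam s' s a :=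
    fun s a => Finset.sum_nonneg (fun s' hs' => hlam s' s a (Finset.ne_of_mem_erase hs'))
  set Lb : ℝ := Finset.univ.sup' Finset.univ_nonempty
      (fun p : S × A => ∑ s' ∈ Finset.univ.erase p.1, lam s' p.1 p.2) with hLbdef
  have hLb : ∀ (s : S) (a : A), (∑ s' ∈ Finset.univ.erase s, lam s' s a) ≤ Lb := fun s a =>
    Finset.le_sup' (f := fun p : S × A => ∑ s' ∈ Finset.univ.erase p.1, lam s' p.1 p.2)
      (Finset.mem_univ (s, a))
  have hLb0 : 0 ≤ Lb := le_trans (hΛ0 s₁ a₁) (hLb s₁ a₁)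
  set Vb : ℝ := Finset.univ.sup' Finset.univ_nonempty (fun s => |V₀ s|) with hVbdef
  have hVb : ∀ s, |V₀ s| ≤ Vb := fun s =>
    Finset.le_sup' (f := fun s => |V₀ s|) (Finset.mem_univ s)
  have hVb0 : 0 ≤ Vb := le_trans (abs_nonneg _) (hVb s₁)
  set Db : ℝ := 2 * Lb * Vb with hDbdef
  have hDb0 : 0 ≤ Db := by positivity
  have hDb : ∀ (s : S) (a : A), |Dop lam V₀ s a| ≤ Db := by
    intro s a
    refine le_trans (Dop_bound lam V₀ s a (fun s' h => hlam s' s a h) Vb hVb) ?_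
    have h1 := hLb s a
    have h2 := hΛ0 s a
    rw [hDbdef]; nlinarith
  set K : ℝ := γ * Db + γ ^ 2 * Vb with hKdef
  have hK0 : 0 ≤ K := by positivity
  set C : ℝ := 2 * K / γ with hCdef
  have hC0 : 0 ≤ C := by positivity
  set P : Finset (S × A) := Finset.univ.filter (fun p : S × A => p.2 ≠ a₀ p.1) with hPdef
  have hPne : P.Nonempty := ⟨(s₁, a₁), Finset.mem_filter.mpr ⟨Finset.mem_univ _, ha₁⟩⟩
  set ε : ℝ := P.inf' hPne
      (fun p => contRHS f lam V₀ p.1 (a₀ p.1) - contRHS f lam V₀ p.1 p.2) with hεdef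
  have hε0 : 0 < ε := by
    rw [hεdef, Finset.lt_inf'_iff]
    intro p hp
    have := ha₀ p.1 p.2 (Finset.mem_filter.mp hp).2
    linarith
  have hε : ∀ (s : S) (a : A), a ≠ a₀ s →
      contRHS f lam V₀ s a ≤ contRHS f lam V₀ s (a₀ s) - ε := by
    intro s a h
    have hmem : (s, a) ∈ P := by rw [hPdef]; simp [h]
    have h1 := Finset.inf'_le
      (f := fun p : S × A => contRHS f lam V₀ p.1 (a₀ p.1) - contRHS f lam V₀ p.1 p.2)
      hmem
    have h2 : ε ≤ contRHS f lam V₀ s (a₀ s) - contRHS f lam V₀ s a := h1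
    linarith
  set M : ℝ := 4 * Lb * C + 4 * γ * Lb * (Vb + C) with hMdef
  have hM0 : 0 ≤ M := by positivity
  set Δ₀ : ℝ := min (min 1 (1 / (2 * γ))) (ε / (M + 1)) with hΔ₀def
  have hΔ₀pos : 0 < Δ₀ := lt_min (lt_min one_pos (by positivity)) (by positivity)
  -- Convergence estimate
  have hconv : ∀ Δ : ℝ, 0 < Δ → γ * Δ ≤ 1 / 2 →
      (∀ s a, Δ * (∑ s' ∈ Finset.univ.erase s, lam s' s a) ≤ 1) →
      ∀ t, |VΔ Δ t - V₀ t| ≤ C * Δ := by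
    intro Δ hΔ hγΔ hadm
    have hx0 : 0 ≤ γ * Δ := by positivity
    have hexle : Real.exp (-(γ * Δ)) ≤ 1 := Real.exp_le_one_iff.mpr (by linarith)
    have hexge : 1 - γ * Δ ≤ Real.exp (-(γ * Δ)) := by
      have := Real.add_one_le_exp (-(γ * Δ)); linarith
    have hexq : |Real.exp (-(γ * Δ)) - 1 - -(γ * Δ)| ≤ (-(γ * Δ)) ^ 2 :=
      Real.abs_exp_sub_one_sub_id_le (by rw [abs_neg, abs_of_nonneg hx0]; linarith)
    set N : ℝ := Finset.univ.sup' Finset.univ_nonempty (fun t => |VΔ Δ t - V₀ t|) with hNdef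
    have hN : ∀ t, |VΔ Δ t - V₀ t| ≤ N := fun t =>
      Finset.le_sup' (f := fun t => |VΔ Δ t - V₀ t|) (Finset.mem_univ t)
    have hN0 : 0 ≤ N := le_trans (abs_nonneg _) (hN s₁)
    have hfix := hVΔ Δ hΔ hadm
    have stepA : ∀ s, |Finset.univ.sup' Finset.univ_nonempty (discRHS f lam γ Δ V₀ s)
        - V₀ s| ≤ K * Δ ^ 2 := by
      intro s
      set g : A → ℝ := fun a => Δ * contRHS f lam V₀ s a + Real.exp (-(γ * Δ)) * V₀ s
        with hgdef
      have hga : ∀ a ∈ (Finset.univ : Finset A),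
          |discRHS f lam γ Δ V₀ s a - g a| ≤ γ * Δ ^ 2 * Db := by
        intro a _
        have heq : discRHS f lam γ Δ V₀ s a - g a
            = (Real.exp (-(γ * Δ)) - 1) * (Δ * Dop lam V₀ s a) := by
          simp only [hgdef]
          rw [discRHS_eq, contRHS_eq]; ring
        rw [heq, abs_mul, abs_mul]
        have h1 : |Real.exp (-(γ * Δ)) - 1| ≤ γ * Δ := by
          rw [abs_of_nonpos (by linarith)]; linarith
        have h2 := hDb s a
        have h3 : |Δ| = Δ := abs_of_pos hΔ
        rw [h3]
        calc |Real.exp (-(γ * Δ)) - 1| * (Δ * |Dop lam V₀ s a|)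
            ≤ (γ * Δ) * (Δ * Db) := by
              refine mul_le_mul h1 (mul_le_mul_of_nonneg_left h2 hΔ.le) ?_ hx0
              positivity
          _ = γ * Δ ^ 2 * Db := by ring
      have hsupg : Finset.univ.sup' Finset.univ_nonempty g
          = Δ * (γ * V₀ s) + Real.exp (-(γ * Δ)) * V₀ s := by
        apply le_antisymm
        · refine Finset.sup'_le _ _ (fun a _ => ?_)
          have h1 : contRHS f lam V₀ s a ≤ γ * V₀ s := by
            rw [hV₀ s]
            exact Finset.le_sup' (f := contRHS f lam V₀ s) (Finset.mem_univ a)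
          have h2 := mul_le_mul_of_nonneg_left h1 hΔ.le
          simp only [hgdef]; linarith
        · obtain ⟨b, _, hb⟩ :=
            Finset.exists_mem_eq_sup' Finset.univ_nonempty (contRHS f lam V₀ s)
          have h3 : γ * V₀ s = contRHS f lam V₀ s b := by rw [hV₀ s, hb]
          rw [h3]
          exact Finset.le_sup' g (Finset.mem_univ b)
      have h3 := sup'_abs_diff Finset.univ Finset.univ_nonempty
        (discRHS f lam γ Δ V₀ s) g (γ * Δ ^ 2 * Db) hga
      have h4 : |Finset.univ.sup' Finset.univ_nonempty g - V₀ s| ≤ γ ^ 2 * Δ ^ 2 * Vb := by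
        rw [hsupg]
        have h5 : Δ * (γ * V₀ s) + Real.exp (-(γ * Δ)) * V₀ s - V₀ s
            = (Real.exp (-(γ * Δ)) - 1 - -(γ * Δ)) * V₀ s := by ring
        rw [h5, abs_mul]
        have h6 := mul_le_mul hexq (hVb s) (abs_nonneg _) (by positivity)
        nlinarith
      refine le_trans (abs_sub_le _ (Finset.univ.sup' Finset.univ_nonempty g) _) ?_
      rw [hKdef]; nlinarith
    have stepB : ∀ s, |VΔ Δ s - V₀ s| ≤ Real.exp (-(γ * Δ)) * N + K * Δ ^ 2 := by
      intro s
      rw [hfix s]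
      have hB1 : ∀ a ∈ (Finset.univ : Finset A),
          |discRHS f lam γ Δ (VΔ Δ) s a - discRHS f lam γ Δ V₀ s a|
            ≤ Real.exp (-(γ * Δ)) * N := by
        intro a _
        have heq : discRHS f lam γ Δ (VΔ Δ) s a - discRHS f lam γ Δ V₀ s a
            = Real.exp (-(γ * Δ)) *
              ((VΔ Δ s - V₀ s) + Δ * Dop lam (fun t => VΔ Δ t - V₀ t) s a) := by
          rw [discRHS_eq, discRHS_eq, show
            (VΔ Δ s - V₀ s) + Δ * Dop lam (fun t => VΔ Δ t - V₀ t) s a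
              = (VΔ Δ s - V₀ s) + Δ * (Dop lam (VΔ Δ) s a - Dop lam V₀ s a) by
            rw [Dop_sub]]
          ring
        rw [heq, abs_mul, abs_of_pos (Real.exp_pos _)]
        exact mul_le_mul_of_nonneg_left
          (stoch_bound lam _ s a (fun s' h => hlam s' s a h) Δ hΔ.le (hadm s a) N hN)
          (Real.exp_pos _).le
      have h6 := sup'_abs_diff Finset.univ Finset.univ_nonempty
        (discRHS f lam γ Δ (VΔ Δ) s) (discRHS f lam γ Δ V₀ s) _ hB1
      have h7 := stepA s
      refine le_trans (abs_sub_le _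
        (Finset.univ.sup' Finset.univ_nonempty (discRHS f lam γ Δ V₀ s)) _) (by linarith)
    have hNle : N ≤ Real.exp (-(γ * Δ)) * N + K * Δ ^ 2 :=
      Finset.sup'_le _ _ (fun t _ => stepB t)
    have hxq2 : Real.exp (-(γ * Δ)) ≤ 1 - γ * Δ + (γ * Δ) ^ 2 := by
      have := (abs_le.mp hexq).2; nlinarith
    have h8 : γ * Δ / 2 ≤ 1 - Real.exp (-(γ * Δ)) := by nlinarith
    have h9 : N * (γ * Δ / 2) ≤ K * Δ ^ 2 := by nlinarith
    have h10 : N * γ * Δ ≤ 2 * K * Δ * Δ := by nlinarith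
    have h11 : N * γ ≤ 2 * K * Δ := le_of_mul_le_mul_right (by nlinarith) hΔ
    have h12 : N ≤ C * Δ := by
      rw [hCdef, div_mul_eq_mul_div, le_div_iff₀ hγ]; nlinarith
    exact fun t => le_trans (hN t) h12
  -- Conclusion
  refine ⟨Δ₀, hΔ₀pos, ?_⟩
  intro Δ hΔ hΔlt hadm s
  have hΔ1 : Δ ≤ 1 :=
    le_trans hΔlt.le (le_trans (min_le_left _ _) (min_le_left _ _))
  have hγΔ : γ * Δ ≤ 1 / 2 := by
    have h := lt_of_lt_of_le hΔlt (le_trans (min_le_left _ _) (min_le_right _ _))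
    rw [lt_div_iff₀ (by positivity)] at h
    nlinarith
  have hΔM : Δ * (M + 1) < ε := by
    have h := lt_of_lt_of_le hΔlt (min_le_right _ _)
    rw [lt_div_iff₀ (by positivity)] at h
    linarith
  have hWb := hconv Δ hΔ hγΔ hadm
  by_contra hne
  have h1 := haΔ Δ hΔ hadm s (a₀ s) (Ne.symm hne)
  have hVΔb : ∀ t, |VΔ Δ t| ≤ Vb + C * Δ := by
    intro t
    have h2 := hVb t
    have h3 := hWb t
    have h4 : VΔ Δ t = V₀ t + (VΔ Δ t - V₀ t) := by ring
    rw [h4]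
    exact le_trans (abs_add_le _ _) (by linarith)
  have hkey : ∀ b : A, discRHS f lam γ Δ (VΔ Δ) s b =
      Δ * (contRHS f lam V₀ s b + Dop lam (fun t => VΔ Δ t - V₀ t) s b
        + (Real.exp (-(γ * Δ)) - 1) * Dop lam (VΔ Δ) s b)
      + Real.exp (-(γ * Δ)) * VΔ Δ s := by
    intro b
    have h' : Dop lam (fun t => VΔ Δ t - V₀ t) s b
        = Dop lam (VΔ Δ) s b - Dop lam V₀ s b := (Dop_sub lam (VΔ Δ) V₀ s b).symm
    rw [discRHS_eq, contRHS_eq, h']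
    ring
  have e1 : contRHS f lam V₀ s (aΔ Δ s) ≤ contRHS f lam V₀ s (a₀ s) - ε := hε s _ hne
  have e2 : ∀ b : A, |Dop lam (fun t => VΔ Δ t - V₀ t) s b| ≤ 2 * Lb * (C * Δ) := by
    intro b
    refine le_trans (Dop_bound lam _ s b (fun s' h => hlam s' s b h) (C * Δ) hWb) ?_
    have h5 := hLb s b
    have h6 := hΛ0 s b
    nlinarith [mul_nonneg hC0 hΔ.le]
  have e3 : ∀ b : A, |Dop lam (VΔ Δ) s b| ≤ 2 * Lb * (Vb + C * Δ) := by
    intro b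
    refine le_trans (Dop_bound lam _ s b (fun s' h => hlam s' s b h) (Vb + C * Δ) hVΔb) ?_
    have h5 := hLb s b
    have h6 := hΛ0 s b
    nlinarith [mul_nonneg hC0 hΔ.le]
  have e4 : |Real.exp (-(γ * Δ)) - 1| ≤ γ * Δ := by
    have hexle : Real.exp (-(γ * Δ)) ≤ 1 := Real.exp_le_one_iff.mpr (by nlinarith)
    have hexge : 1 - γ * Δ ≤ Real.exp (-(γ * Δ)) := by
      have := Real.add_one_le_exp (-(γ * Δ)); linarith
    rw [abs_of_nonpos (by linarith)]; linarith
  have e5 : |(Real.exp (-(γ * Δ)) - 1) *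
      (Dop lam (VΔ Δ) s (aΔ Δ s) - Dop lam (VΔ Δ) s (a₀ s))|
      ≤ γ * Δ * (4 * Lb * (Vb + C * Δ)) := by
    rw [abs_mul]
    have h5 := e3 (aΔ Δ s)
    have h6 := e3 (a₀ s)
    have h7 : |Dop lam (VΔ Δ) s (aΔ Δ s) - Dop lam (VΔ Δ) s (a₀ s)|
        ≤ 4 * Lb * (Vb + C * Δ) := le_trans (abs_sub _ _) (by linarith)
    exact mul_le_mul e4 h7 (abs_nonneg _) (by positivity)
  have hbr : (contRHS f lam V₀ s (aΔ Δ s) + Dop lam (fun t => VΔ Δ t - V₀ t) s (aΔ Δ s)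
        + (Real.exp (-(γ * Δ)) - 1) * Dop lam (VΔ Δ) s (aΔ Δ s))
      - (contRHS f lam V₀ s (a₀ s) + Dop lam (fun t => VΔ Δ t - V₀ t) s (a₀ s)
        + (Real.exp (-(γ * Δ)) - 1) * Dop lam (VΔ Δ) s (a₀ s)) < 0 := by
    have h5 := (abs_le.mp (e2 (aΔ Δ s))).2
    have h6 := (abs_le.mp (e2 (a₀ s))).1
    have h7 : (Real.exp (-(γ * Δ)) - 1) * Dop lam (VΔ Δ) s (aΔ Δ s)
        - (Real.exp (-(γ * Δ)) - 1) * Dop lam (VΔ Δ) s (a₀ s)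
        ≤ γ * Δ * (4 * Lb * (Vb + C * Δ)) := by
      have hh := (abs_le.mp e5).2
      have hh2 := mul_sub (Real.exp (-(γ * Δ)) - 1)
        (Dop lam (VΔ Δ) s (aΔ Δ s)) (Dop lam (VΔ Δ) s (a₀ s))
      linarith
    -- total: ≤ -ε + 4LbCΔ + γΔ·4Lb(Vb+CΔ) ≤ -ε + Δ*M < 0
    have h9 : γ * Δ * (4 * Lb * (Vb + C * Δ)) ≤ Δ * (4 * γ * Lb * (Vb + C)) := by
      nlinarith [mul_nonneg (mul_nonneg (mul_nonneg hγ.le hΔ.le) hLb0)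
        (mul_nonneg hC0 (by linarith : (0:ℝ) ≤ 1 - Δ))]
    have h10 : Δ * M < ε := by
      have hr : Δ * (M + 1) = Δ * M + Δ := by ring
      linarith
    have h11 : 4 * (Lb * (C * Δ)) ≤ Δ * (4 * Lb * C) := le_of_eq (by ring)
    have h12 : Δ * M = Δ * (4 * Lb * C) + Δ * (4 * γ * Lb * (Vb + C)) := by
      rw [hMdef]; ring
    linarith
  have hlt : discRHS f lam γ Δ (VΔ Δ) s (aΔ Δ s)
      - discRHS f lam γ Δ (VΔ Δ) s (a₀ s) < 0 := by
    rw [hkey (aΔ Δ s), hkey (a₀ s)]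
    have heq : Δ * (contRHS f lam V₀ s (aΔ Δ s) + Dop lam (fun t => VΔ Δ t - V₀ t) s (aΔ Δ s)
          + (Real.exp (-(γ * Δ)) - 1) * Dop lam (VΔ Δ) s (aΔ Δ s))
        + Real.exp (-(γ * Δ)) * VΔ Δ s
        - (Δ * (contRHS f lam V₀ s (a₀ s) + Dop lam (fun t => VΔ Δ t - V₀ t) s (a₀ s)
          + (Real.exp (-(γ * Δ)) - 1) * Dop lam (VΔ Δ) s (a₀ s))
        + Real.exp (-(γ * Δ)) * VΔ Δ s)
        = Δ * ((contRHS f lam V₀ s (aΔ Δ s) + Dop lam (fun t => VΔ Δ t - V₀ t) s (aΔ Δ s)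
          + (Real.exp (-(γ * Δ)) - 1) * Dop lam (VΔ Δ) s (aΔ Δ s))
        - (contRHS f lam V₀ s (a₀ s) + Dop lam (fun t => VΔ Δ t - V₀ t) s (a₀ s)
          + (Real.exp (-(γ * Δ)) - 1) * Dop lam (VΔ Δ) s (a₀ s))) := by ring
    rw [heq]
    exact mul_neg_of_pos_of_neg hΔ hbr
  linarith
end

section
/- Let S and A be finite nonempty sets, r¹, r² : S × A × A → ℝ, λ(s'|s,a¹,a²) ≥ 0 for s' ≠ s with total rate Λ(s,a¹,a²) := ∑_{s'≠s} λ(s'|s,a¹,a²), and γ > 0. Let (Δ_n) be positive reals with Δ_n → 0 and Δ_n·Λ ≤ 1 everywhere, and for each n let σ¹_n, σ²_n : S → Δ(A) be mixed stationary strategies and V¹_n, V²_n : S → ℝ be functions satisfying, for all s ∈ S: V¹_n(s) = max_{a∈A} ( Δ_n·r¹(s,a,σ²_n) + e^{−γΔ_n}·∑_{s'} p_{Δ_n}(s'|s,a,σ²_n)·V¹_n(s') ), V¹_n(s) = Δ_n·r¹(s,σ¹_n,σ²_n) + e^{−γΔ_n}·∑_{s'} p_{Δ_n}(s'|s,σ¹_n,σ²_n)·V¹_n(s'),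 and the symmetric pair of equations for V²_n with the maximum over player 2's action a and r², λ evaluated at (σ¹_n, a). Suppose (σ¹_n, σ²_n, V¹_n, V²_n) converges pointwise to (σ¹*, σ²*, V¹*, V²*). Then the limit satisfies the continuous-time coupled optimality equations: for all s ∈ S, γ·V¹*(s) = max_{a∈A} ( r¹(s,a,σ²*) + ∑_{s'≠s} λ(s'|s,a,σ²*)·( V¹*(s') − V¹*(s) ) ) and γ·V¹*(s) = r¹(s,σ¹*,σ²*) + ∑_{s'≠s} λ(s'|s,σ¹*,σ²*)·( V¹*(s') − V¹*(s) ), together with the symmetric pair of equations for V²* with the maximum over player 2's action. -/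
/-!
Writing `p_Δ` out, each discrete equation at a state `s` takes the form
`V = Δ · X_Δ + e^{-γΔ} · V`, where `X_Δ` is the reward plus `e^{-γΔ}` times the generator term
`∑_{s' ≠ s} λ(s'|s,·) (V(s') - V(s))`, maximised over the free action in the optimality
equations; the maximum commutes with `x ↦ Δ x + c` because `Δ > 0`. Hence
`(1 - e^{-γΔ}) / Δ · V = X_Δ`, and letting `Δ → 0` the left side tends to `γ V*`
(the derivative of `1 - e^{-γx}` at `0`), while `X_Δ` tends to the continuous-time right side,
a maximum of finitely many convergent sequences being convergent.
-/

noncomputable section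

/-- Payoff `r(s,a,σ²)` of a pure action `a` of player 1 against the mixed
action `σ²(·|s)` of player 2. -/
def rMix2 {S A : Type*} [Fintype A]
    (r : S → A → A → ℝ) (σ2 : S → A → ℝ) (s : S) (a : A) : ℝ :=
  ∑ a2, r s a a2 * σ2 s a2

/-- Payoff `r(s,σ¹,a)` of a pure action `a` of player 2 against the mixed
action `σ¹(·|s)` of player 1. -/
def rMix1 {S A : Type*} [Fintype A]
    (r : S → A → A → ℝ) (σ1 : S → A → ℝ) (s : S) (a : A) : ℝ :=
  ∑ a1, r s a1 a * σ1 s a1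

/-- Payoff `r(s,σ¹,σ²)` under the pair of mixed actions. -/
def rMixBoth {S A : Type*} [Fintype A]
    (r : S → A → A → ℝ) (σ1 σ2 : S → A → ℝ) (s : S) : ℝ :=
  ∑ a1, ∑ a2, r s a1 a2 * σ1 s a1 * σ2 s a2

/-- Transition rate `λ(s'|s,a,σ²)` of a pure action `a` of player 1 against
the mixed action `σ²(·|s)` of player 2. -/
def lamMix2 {S A : Type*} [Fintype A]
    (lam : S → S → A → A → ℝ) (σ2 : S → A → ℝ) (s' s : S) (a : A) : ℝ :=
  ∑ a2, lam s' s a a2 * σ2 s a2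

/-- Transition rate `λ(s'|s,σ¹,a)` of a pure action `a` of player 2 against
the mixed action `σ¹(·|s)` of player 1. -/
def lamMix1 {S A : Type*} [Fintype A]
    (lam : S → S → A → A → ℝ) (σ1 : S → A → ℝ) (s' s : S) (a : A) : ℝ :=
  ∑ a1, lam s' s a1 a * σ1 s a1

/-- Transition rate `λ(s'|s,σ¹,σ²)` under the pair of mixed actions. -/
def lamMixBoth {S A : Type*} [Fintype A]
    (lam : S → S → A → A → ℝ) (σ1 σ2 : S → A → ℝ) (s' s : S) : ℝ :=
  ∑ a1, ∑ a2, lam s' s a1 a2 * σ1 s a1 * σ2 s a2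


open Filter Topology Finset Real

lemma tendsto_one_sub_exp_neg_mul_div (γ : ℝ) :
    Tendsto (fun x => (1 - exp (-(γ * x))) / x) (𝓝[≠] 0) (𝓝 γ) := by
  have hderiv : HasDerivAt (fun x => 1 - exp (-(γ * x))) γ 0 := by
    simpa using (((hasDerivAt_id (0 : ℝ)).const_mul γ).neg.exp.const_sub 1)
  refine hderiv.tendsto_slope_zero.congr fun x => ?_
  simp [div_eq_inv_mul]

section DiscountedLimit

variable {ι S : Type*} {l : Filter ι}

lemma tendsto_exp_neg_mul_nhds_one {Δ : ι → ℝ} (γ : ℝ) (hΔ : Tendsto Δ l (𝓝 0)) :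
    Tendsto (fun i => exp (-(γ * Δ i))) l (𝓝 1) := by
  simpa [Function.comp_def] using (continuous_exp.tendsto _).comp (hΔ.const_mul γ).neg

lemma mul_eq_of_tendsto_discounted_fixed_point [l.NeBot] {Δ v x : ι → ℝ} {γ v₀ x₀ : ℝ}
    (hΔ : Tendsto Δ l (𝓝[≠] 0)) (hfix : ∀ᶠ i in l, v i = Δ i * x i + exp (-(γ * Δ i)) * v i)
    (hv : Tendsto v l (𝓝 v₀)) (hx : Tendsto x l (𝓝 x₀)) :
    γ * v₀ = x₀ := by
  have hx_eq : ∀ᶠ i in l, (1 - exp (-(γ * Δ i))) / Δ i * v i = x i := by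
    filter_upwards [hfix, tendsto_nhdsWithin_iff.1 hΔ |>.2] with i hi hΔi
    field_simp [show Δ i ≠ 0 from hΔi]
    linear_combination hi
  exact tendsto_nhds_unique
    (((tendsto_one_sub_exp_neg_mul_div γ).comp hΔ).mul hv |>.congr' hx_eq) hx

lemma discounted_step_eq (Δ e R : ℝ) (T : Finset S) (L v : S → ℝ) (s : S) :
    Δ * R + e * ((1 - Δ * ∑ s' ∈ T, L s') * v s + ∑ s' ∈ T, Δ * L s' * v s') =
      Δ * (R + e * ∑ s' ∈ T, L s' * (v s' - v s)) + e * v s := by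
  simp only [mul_sub, sum_sub_distrib, ← sum_mul, mul_assoc, ← mul_sum]
  ring

variable {Δ : ι → ℝ} {γ : ℝ} {T : Finset S} {s : S} {V : ι → S → ℝ} {V₀ : S → ℝ}

lemma tendsto_discounted_generator {R : ι → ℝ} {R₀ : ℝ} {L : ι → S → ℝ} {L₀ : S → ℝ}
    (hΔ : Tendsto Δ l (𝓝 0)) (hR : Tendsto R l (𝓝 R₀))
    (hL : ∀ s', Tendsto (L · s') l (𝓝 (L₀ s'))) (hV : ∀ s', Tendsto (V · s') l (𝓝 (V₀ s'))) :
    Tendsto (fun i => R i + exp (-(γ * Δ i)) * ∑ s' ∈ T, L i s' * (V i s' - V i s)) l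
      (𝓝 (R₀ + ∑ s' ∈ T, L₀ s' * (V₀ s' - V₀ s))) := by
  simpa using hR.add <| (tendsto_exp_neg_mul_nhds_one γ hΔ).mul <|
    tendsto_finsetSum T fun s' _ => (hL s').mul ((hV s').sub (hV s))

lemma mul_eq_of_tendsto_discrete_evaluation [l.NeBot] {R : ι → ℝ} {R₀ : ℝ}
    {L : ι → S → ℝ} {L₀ : S → ℝ} (hΔ : Tendsto Δ l (𝓝[≠] 0))
    (hV_eq : ∀ i, V i s = Δ i * R i + exp (-(γ * Δ i)) *
      ((1 - Δ i * ∑ s' ∈ T, L i s') * V i s + ∑ s' ∈ T, Δ i * L i s' * V i s'))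
    (hR : Tendsto R l (𝓝 R₀)) (hL : ∀ s', Tendsto (L · s') l (𝓝 (L₀ s')))
    (hV : ∀ s', Tendsto (V · s') l (𝓝 (V₀ s'))) :
    γ * V₀ s = R₀ + ∑ s' ∈ T, L₀ s' * (V₀ s' - V₀ s) :=
  mul_eq_of_tendsto_discounted_fixed_point hΔ
    (Eventually.of_forall fun i => (hV_eq i).trans (discounted_step_eq _ _ _ _ _ _ _))
    (hV s) (tendsto_discounted_generator (hΔ.mono_right nhdsWithin_le_nhds) hR hL hV)

lemma mul_eq_of_tendsto_discrete_optimality [l.NeBot] {A : Type*} {U : Finset A}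
    (hU : U.Nonempty) {R : ι → A → ℝ} {R₀ : A → ℝ} {L : ι → A → S → ℝ} {L₀ : A → S → ℝ}
    (hΔ : Tendsto Δ l (𝓝[>] 0))
    (hV_eq : ∀ i, V i s = U.sup' hU fun a => Δ i * R i a + exp (-(γ * Δ i)) *
      ((1 - Δ i * ∑ s' ∈ T, L i a s') * V i s + ∑ s' ∈ T, Δ i * L i a s' * V i s'))
    (hR : ∀ a, Tendsto (R · a) l (𝓝 (R₀ a))) (hL : ∀ a s', Tendsto (L · a s') l (𝓝 (L₀ a s')))
    (hV : ∀ s', Tendsto (V · s') l (𝓝 (V₀ s'))) :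
    γ * V₀ s = U.sup' hU fun a => R₀ a + ∑ s' ∈ T, L₀ a s' * (V₀ s' - V₀ s) := by
  have hfix : ∀ᶠ i in l, V i s = Δ i * U.sup' hU (fun a =>
      R i a + exp (-(γ * Δ i)) * ∑ s' ∈ T, L i a s' * (V i s' - V i s)) +
      exp (-(γ * Δ i)) * V i s := by
    filter_upwards [tendsto_nhdsWithin_iff.1 hΔ |>.2] with i hΔi
    rw [mul₀_sup' (le_of_lt hΔi), sup'_add]
    exact (hV_eq i).trans (by simp only [discounted_step_eq])
  refine mul_eq_of_tendsto_discounted_fixed_point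
    (hΔ.mono_right (nhdsGT_le_nhdsNE 0)) hfix (hV s) ?_
  exact Tendsto.finset_sup'_nhds_apply hU fun a _ =>
    tendsto_discounted_generator (hΔ.mono_right nhdsWithin_le_nhds) (hR a) (hL a) hV

end DiscountedLimit

section MixedExtension

variable {ι S A : Type*} [Fintype A] {l : Filter ι} {σ σ' : ι → S → A → ℝ} {σ₀ σ₀' : S → A → ℝ}
  {s : S}

lemma tendsto_rMix1 (r : S → A → A → ℝ) (hσ : ∀ a, Tendsto (σ · s a) l (𝓝 (σ₀ s a))) (a : A) :
    Tendsto (fun i => rMix1 r (σ i) s a) l (𝓝 (rMix1 r σ₀ s a)) :=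
  tendsto_finsetSum _ fun a' _ => tendsto_const_nhds.mul (hσ a')

lemma tendsto_rMix2 (r : S → A → A → ℝ) (hσ : ∀ a, Tendsto (σ · s a) l (𝓝 (σ₀ s a))) (a : A) :
    Tendsto (fun i => rMix2 r (σ i) s a) l (𝓝 (rMix2 r σ₀ s a)) :=
  tendsto_finsetSum _ fun a' _ => tendsto_const_nhds.mul (hσ a')

lemma tendsto_rMixBoth (r : S → A → A → ℝ) (hσ : ∀ a, Tendsto (σ · s a) l (𝓝 (σ₀ s a)))
    (hσ' : ∀ a, Tendsto (σ' · s a) l (𝓝 (σ₀' s a))) :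
    Tendsto (fun i => rMixBoth r (σ i) (σ' i) s) l (𝓝 (rMixBoth r σ₀ σ₀' s)) :=
  tendsto_finsetSum _ fun a _ => tendsto_finsetSum _ fun a' _ =>
    (tendsto_const_nhds.mul (hσ a)).mul (hσ' a')

end MixedExtension

theorem nash_equilibrium_discretization_limit_general
    {S A : Type*} [Fintype S] [DecidableEq S]
    [Fintype A] [Nonempty A]
    (r1 r2 : S → A → A → ℝ) (lam : S → S → A → A → ℝ)
    (γ : ℝ)
    (Δ : ℕ → ℝ) (hΔpos : ∀ n, 0 < Δ n)
    (hΔ0 : Filter.Tendsto Δ Filter.atTop (nhds 0))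
    (σ1 σ2 : ℕ → S → A → ℝ)
    (V1 V2 : ℕ → S → ℝ)
    (hV1opt : ∀ n, ∀ s : S, V1 n s =
      Finset.univ.sup' Finset.univ_nonempty (fun a : A =>
        Δ n * rMix2 r1 (σ2 n) s a + Real.exp (-(γ * Δ n)) *
          ((1 - Δ n * ∑ s' ∈ Finset.univ.erase s,
              lamMix2 lam (σ2 n) s' s a) * V1 n s +
            ∑ s' ∈ Finset.univ.erase s,
              Δ n * lamMix2 lam (σ2 n) s' s a * V1 n s')))
    (hV1eval : ∀ n, ∀ s : S, V1 n s =
      Δ n * rMixBoth r1 (σ1 n) (σ2 n) s + Real.exp (-(γ * Δ n)) *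
        ((1 - Δ n * ∑ s' ∈ Finset.univ.erase s,
            lamMixBoth lam (σ1 n) (σ2 n) s' s) * V1 n s +
          ∑ s' ∈ Finset.univ.erase s,
            Δ n * lamMixBoth lam (σ1 n) (σ2 n) s' s * V1 n s'))
    (hV2opt : ∀ n, ∀ s : S, V2 n s =
      Finset.univ.sup' Finset.univ_nonempty (fun a : A =>
        Δ n * rMix1 r2 (σ1 n) s a + Real.exp (-(γ * Δ n)) *
          ((1 - Δ n * ∑ s' ∈ Finset.univ.erase s,
              lamMix1 lam (σ1 n) s' s a) * V2 n s +
            ∑ s' ∈ Finset.univ.erase s,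
              Δ n * lamMix1 lam (σ1 n) s' s a * V2 n s')))
    (hV2eval : ∀ n, ∀ s : S, V2 n s =
      Δ n * rMixBoth r2 (σ1 n) (σ2 n) s + Real.exp (-(γ * Δ n)) *
        ((1 - Δ n * ∑ s' ∈ Finset.univ.erase s,
            lamMixBoth lam (σ1 n) (σ2 n) s' s) * V2 n s +
          ∑ s' ∈ Finset.univ.erase s,
            Δ n * lamMixBoth lam (σ1 n) (σ2 n) s' s * V2 n s'))
    (σ1s σ2s : S → A → ℝ) (V1s V2s : S → ℝ)
    (hσ1conv : ∀ s a, Filter.Tendsto (fun n => σ1 n s a)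
      Filter.atTop (nhds (σ1s s a)))
    (hσ2conv : ∀ s a, Filter.Tendsto (fun n => σ2 n s a)
      Filter.atTop (nhds (σ2s s a)))
    (hV1conv : ∀ s, Filter.Tendsto (fun n => V1 n s)
      Filter.atTop (nhds (V1s s)))
    (hV2conv : ∀ s, Filter.Tendsto (fun n => V2 n s)
      Filter.atTop (nhds (V2s s))) :
    (∀ s : S, γ * V1s s =
      Finset.univ.sup' Finset.univ_nonempty (fun a : A =>
        rMix2 r1 σ2s s a + ∑ s' ∈ Finset.univ.erase s,
          lamMix2 lam σ2s s' s a * (V1s s' - V1s s))) ∧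
    (∀ s : S, γ * V1s s =
      rMixBoth r1 σ1s σ2s s + ∑ s' ∈ Finset.univ.erase s,
        lamMixBoth lam σ1s σ2s s' s * (V1s s' - V1s s)) ∧
    (∀ s : S, γ * V2s s =
      Finset.univ.sup' Finset.univ_nonempty (fun a : A =>
        rMix1 r2 σ1s s a + ∑ s' ∈ Finset.univ.erase s,
          lamMix1 lam σ1s s' s a * (V2s s' - V2s s))) ∧
    (∀ s : S, γ * V2s s =
      rMixBoth r2 σ1s σ2s s + ∑ s' ∈ Finset.univ.erase s,
        lamMixBoth lam σ1s σ2s s' s * (V2s s' - V2s s)) := by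
  have hΔ : Tendsto Δ atTop (𝓝[>] 0) :=
    tendsto_nhdsWithin_iff.2 ⟨hΔ0, Eventually.of_forall hΔpos⟩
  have hΔne := hΔ.mono_right (nhdsGT_le_nhdsNE 0)
  -- `lamMix* lam` at the target `s'` unfolds to `rMix* (lam s')`
  refine ⟨fun s => ?_, fun s => ?_, fun s => ?_, fun s => ?_⟩
  · exact mul_eq_of_tendsto_discrete_optimality univ_nonempty hΔ (hV1opt · s)
      (tendsto_rMix2 r1 (hσ2conv s)) (fun a s' => tendsto_rMix2 (lam s') (hσ2conv s) a) hV1conv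
  · exact mul_eq_of_tendsto_discrete_evaluation hΔne (hV1eval · s)
      (tendsto_rMixBoth r1 (hσ1conv s) (hσ2conv s))
      (fun s' => tendsto_rMixBoth (lam s') (hσ1conv s) (hσ2conv s)) hV1conv
  · exact mul_eq_of_tendsto_discrete_optimality univ_nonempty hΔ (hV2opt · s)
      (tendsto_rMix1 r2 (hσ1conv s)) (fun a s' => tendsto_rMix1 (lam s') (hσ1conv s) a) hV2conv
  · exact mul_eq_of_tendsto_discrete_evaluation hΔne (hV2eval · s)
      (tendsto_rMixBoth r2 (hσ1conv s) (hσ2conv s))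
      (fun s' => tendsto_rMixBoth (lam s') (hσ1conv s) (hσ2conv s)) hV2conv

/-- Convergence of Nash equilibria of the discretized two-player general-sum
game to an equilibrium of the continuous-time game: if for each `n` the
strategy pair `(σ¹_n, σ²_n)` and value functions `(V¹_n, V²_n)` satisfy the
discrete-time Nash optimality and evaluation equations with increment `Δ_n`
(with transition probabilities `p_Δ(s'|s,·) = Δ·λ(s'|s,·)` for `s' ≠ s` and
`p_Δ(s|s,·) = 1 − Δ·Λ(s,·)`), `Δ_n → 0`, and everything converges pointwise
to `(σ¹*, σ²*, V¹*, V²*)`, then the limit satisfies the continuous-time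
coupled optimality equations characterizing a Nash equilibrium. -/
theorem nash_equilibrium_discretization_limit
    {S A : Type*} [Fintype S] [Nonempty S] [DecidableEq S]
    [Fintype A] [Nonempty A]
    (r1 r2 : S → A → A → ℝ) (lam : S → S → A → A → ℝ)
    (hlam : ∀ s' s a1 a2, s' ≠ s → 0 ≤ lam s' s a1 a2)
    (γ : ℝ) (hγ : 0 < γ)
    (Δ : ℕ → ℝ) (hΔpos : ∀ n, 0 < Δ n)
    (hΔ0 : Filter.Tendsto Δ Filter.atTop (nhds 0))
    (hΔlam : ∀ n s a1 a2,
      Δ n * (∑ s' ∈ Finset.univ.erase s, lam s' s a1 a2) ≤ 1)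
    (σ1 σ2 : ℕ → S → A → ℝ)
    (hσ1 : ∀ n s, (∀ a, 0 ≤ σ1 n s a) ∧ ∑ a, σ1 n s a = 1)
    (hσ2 : ∀ n s, (∀ a, 0 ≤ σ2 n s a) ∧ ∑ a, σ2 n s a = 1)
    (V1 V2 : ℕ → S → ℝ)
    (hV1opt : ∀ n, ∀ s : S, V1 n s =
      Finset.univ.sup' Finset.univ_nonempty (fun a : A =>
        Δ n * rMix2 r1 (σ2 n) s a + Real.exp (-(γ * Δ n)) *
          ((1 - Δ n * ∑ s' ∈ Finset.univ.erase s,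
              lamMix2 lam (σ2 n) s' s a) * V1 n s +
            ∑ s' ∈ Finset.univ.erase s,
              Δ n * lamMix2 lam (σ2 n) s' s a * V1 n s')))
    (hV1eval : ∀ n, ∀ s : S, V1 n s =
      Δ n * rMixBoth r1 (σ1 n) (σ2 n) s + Real.exp (-(γ * Δ n)) *
        ((1 - Δ n * ∑ s' ∈ Finset.univ.erase s,
            lamMixBoth lam (σ1 n) (σ2 n) s' s) * V1 n s +
          ∑ s' ∈ Finset.univ.erase s,
            Δ n * lamMixBoth lam (σ1 n) (σ2 n) s' s * V1 n s'))
    (hV2opt : ∀ n, ∀ s : S, V2 n s =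
      Finset.univ.sup' Finset.univ_nonempty (fun a : A =>
        Δ n * rMix1 r2 (σ1 n) s a + Real.exp (-(γ * Δ n)) *
          ((1 - Δ n * ∑ s' ∈ Finset.univ.erase s,
              lamMix1 lam (σ1 n) s' s a) * V2 n s +
            ∑ s' ∈ Finset.univ.erase s,
              Δ n * lamMix1 lam (σ1 n) s' s a * V2 n s')))
    (hV2eval : ∀ n, ∀ s : S, V2 n s =
      Δ n * rMixBoth r2 (σ1 n) (σ2 n) s + Real.exp (-(γ * Δ n)) *
        ((1 - Δ n * ∑ s' ∈ Finset.univ.erase s,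
            lamMixBoth lam (σ1 n) (σ2 n) s' s) * V2 n s +
          ∑ s' ∈ Finset.univ.erase s,
            Δ n * lamMixBoth lam (σ1 n) (σ2 n) s' s * V2 n s'))
    (σ1s σ2s : S → A → ℝ) (V1s V2s : S → ℝ)
    (hσ1conv : ∀ s a, Filter.Tendsto (fun n => σ1 n s a)
      Filter.atTop (nhds (σ1s s a)))
    (hσ2conv : ∀ s a, Filter.Tendsto (fun n => σ2 n s a)
      Filter.atTop (nhds (σ2s s a)))
    (hV1conv : ∀ s, Filter.Tendsto (fun n => V1 n s)
      Filter.atTop (nhds (V1s s)))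
    (hV2conv : ∀ s, Filter.Tendsto (fun n => V2 n s)
      Filter.atTop (nhds (V2s s))) :
    (∀ s : S, γ * V1s s =
      Finset.univ.sup' Finset.univ_nonempty (fun a : A =>
        rMix2 r1 σ2s s a + ∑ s' ∈ Finset.univ.erase s,
          lamMix2 lam σ2s s' s a * (V1s s' - V1s s))) ∧
    (∀ s : S, γ * V1s s =
      rMixBoth r1 σ1s σ2s s + ∑ s' ∈ Finset.univ.erase s,
        lamMixBoth lam σ1s σ2s s' s * (V1s s' - V1s s)) ∧
    (∀ s : S, γ * V2s s =
      Finset.univ.sup' Finset.univ_nonempty (fun a : A =>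
        rMix1 r2 σ1s s a + ∑ s' ∈ Finset.univ.erase s,
          lamMix1 lam σ1s s' s a * (V2s s' - V2s s))) ∧
    (∀ s : S, γ * V2s s =
      rMixBoth r2 σ1s σ2s s + ∑ s' ∈ Finset.univ.erase s,
        lamMixBoth lam σ1s σ2s s' s * (V2s s' - V2s s)) :=
  nash_equilibrium_discretization_limit_general r1 r2 lam γ Δ hΔpos hΔ0 σ1 σ2 V1 V2 hV1opt hV1eval
    hV2opt hV2eval σ1s σ2s V1s V2s hσ1conv hσ2conv hV1conv hV2conv
end
end
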